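/- arXiv:2011.05433 — 3 statements merged into one kernel-verified Lean document; each statement's English description precedes it below -/
import Mathlib

section
/- Let f: [a,b] → ℝ be continuous with C(z) = ∫_a^z f(t) dt. If for every z ∈ (a,b), (1/((z−a)(b−z)))·(C(z) − ((z−a)/(b−a))·C(b))² = 0, then f is constant on [a,b]. -/
open Set intervalIntegral
open Topology Filter

/-- If the unidimensional theoretical CART criterion
`(1/((z-a)(b-z))) * (C z - ((z-a)/(b-a)) C b)^2` vanishes at every cut point
`z ∈ (a,b)`, then the continuous function `f` is constant on `[a,b]`. -/
theorem constant_of_vanishing_cart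
    (a b : ℝ) (hab : a < b) (f : ℝ → ℝ) (hf : ContinuousOn f (Icc a b))
    (hcrit : ∀ z ∈ Ioo a b,
      (1 / ((z - a) * (b - z))) *
        ((∫ t in a..z, f t) - ((z - a) / (b - a)) * ∫ t in a..b, f t) ^ 2 = 0) :
    ∀ x ∈ Icc a b, f x = f a := by
  set m : ℝ := (∫ t in a..b, f t) / (b - a) with hm
  -- C z = (z - a) * m on Ioo
  have hC : ∀ z ∈ Ioo a b, (∫ t in a..z, f t) = (z - a) * m := by
    intro z hz
    have hpos : 0 < (z - a) * (b - z) := by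
      have := hz.1; have := hz.2; nlinarith
    have h := hcrit z hz
    have h1 : ((∫ t in a..z, f t) - ((z - a) / (b - a)) * ∫ t in a..b, f t) ^ 2 = 0 := by
      have hne : (1 : ℝ) / ((z - a) * (b - z)) ≠ 0 := by
        positivity
      exact (mul_eq_zero.1 h).resolve_left hne
    have h2 : (∫ t in a..z, f t) = ((z - a) / (b - a)) * ∫ t in a..b, f t := by
      have h3 := pow_eq_zero_iff (two_ne_zero (α := ℕ)) |>.mp h1
      linarith
    rw [h2, hm]
    field_simp
  -- f = m on Ioo, via FTC + uniqueness of derivative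
  have hcontAt : ∀ z ∈ Ioo a b, ContinuousAt f z := by
    intro z hz
    exact hf.continuousAt (Icc_mem_nhds hz.1 hz.2)
  have hfm : ∀ z ∈ Ioo a b, f z = m := by
    intro z hz
    have hint : IntervalIntegrable f MeasureTheory.volume a z := by
      apply ContinuousOn.intervalIntegrable
      apply hf.mono
      rw [uIcc_of_le (le_of_lt hz.1)]
      exact Icc_subset_Icc le_rfl hz.2.le
    have hmeas : StronglyMeasurableAtFilter f (𝓝 z) MeasureTheory.volume :=
      ContinuousAt.stronglyMeasurableAtFilter isOpen_Ioo hcontAt z hz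
    have hd1 : HasDerivAt (fun u => ∫ t in a..u, f t) (f z) z :=
      intervalIntegral.integral_hasDerivAt_right hint hmeas (hcontAt z hz)
    have hd2 : HasDerivAt (fun u => ∫ t in a..u, f t) m z := by
      have hd : HasDerivAt (fun u : ℝ => (u - a) * m) m z := by
        simpa using ((hasDerivAt_id z).sub_const a).mul_const m
      apply hd.congr_of_eventuallyEq
      filter_upwards [isOpen_Ioo.mem_nhds hz] with u hu
      exact hC u hu
    exact hd1.unique hd2
  -- endpoint values by continuity
  have hne : (𝓝[Ioo a b] a).NeBot := by
    rw [nhdsWithin_Ioo_eq_nhdsGT hab]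
    exact nhdsGT_neBot a
  have hfa : f a = m := by
    have h1 : Filter.Tendsto f (𝓝[Ioo a b] a) (𝓝 (f a)) :=
      ((hf a ⟨le_rfl, hab.le⟩).mono Ioo_subset_Icc_self).tendsto
    have h2 : Filter.Tendsto f (𝓝[Ioo a b] a) (𝓝 m) := by
      apply Filter.Tendsto.congr' _ tendsto_const_nhds
      filter_upwards [self_mem_nhdsWithin] with u hu
      exact (hfm u hu).symm
    exact tendsto_nhds_unique h1 h2
  have hneb : (𝓝[Ioo a b] b).NeBot := by
    rw [nhdsWithin_Ioo_eq_nhdsLT hab]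
    exact nhdsLT_neBot b
  have hfb : f b = m := by
    have h1 : Filter.Tendsto f (𝓝[Ioo a b] b) (𝓝 (f b)) :=
      ((hf b ⟨hab.le, le_rfl⟩).mono Ioo_subset_Icc_self).tendsto
    have h2 : Filter.Tendsto f (𝓝[Ioo a b] b) (𝓝 m) := by
      apply Filter.Tendsto.congr' _ tendsto_const_nhds
      filter_upwards [self_mem_nhdsWithin] with u hu
      exact (hfm u hu).symm
    exact tendsto_nhds_unique h1 h2
  intro x hx
  rcases eq_or_lt_of_le hx.1 with h | h
  · rw [← h]
  rcases eq_or_lt_of_le hx.2 with h' | h'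
  · rw [h', hfb, hfa]
  rw [hfm x ⟨h, h'⟩, hfa]
end

section
/- Optimal assignations for the CART criterion are order-respecting: among binary assignments w ∈ {0,1}^N of values Y_{(1)} ≤ … ≤ Y_{(N)} to two groups L and R (with fixed additional observed points having means Ȳ_{L,obs} ≤ Ȳ_{R,obs}), any assignment w maximizing the CART gain (N_L·N_R/N²)·(Ȳ_L − Ȳ_R)² must be a threshold assignment: there exists 0 ≤ k ≤ N with Y_{(1)},…,Y_{(k)} assigned to L and Y_{(k+1)},…,Y_{(N)} assigned to R. More precisely: if w assigns some Y_{(i)} to R and Y_{(j)} to L with Y_{(i)} < Y_{(j)}, then swapping these two assignments strictly increases (Ȳ_L − Ȳ_R)² provided Ȳ_L ≤ Ȳ_R. -/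
/-- Exchange argument for CART assignations: if `Yi < Yj`, `Yj` is currently in the
left group (of size `NL`, sum `SL`) and `Yi` in the right group (of size `NR`,
sum `SR`), and the left mean is at most the right mean, then swapping the two
values strictly increases the squared difference of the group means. -/
theorem cart_exchange_strict
    (NL NR : ℕ) (hNL : 0 < NL) (hNR : 0 < NR)
    (SL SR Yi Yj : ℝ) (hij : Yi < Yj)
    (hmeans : SL / NL ≤ SR / NR) :
    (SL / NL - SR / NR) ^ 2
      < ((SL - Yj + Yi) / NL - (SR - Yi + Yj) / NR) ^ 2 := by
  have hnl : (0:ℝ) < NL := by exact_mod_cast hNL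
  have hnr : (0:ℝ) < NR := by exact_mod_cast hNR
  have key : (SL - Yj + Yi) / NL - (SR - Yi + Yj) / NR
      = (SL / NL - SR / NR) - (Yj - Yi) * (1/NL + 1/NR) := by
    field_simp
    ring
  rw [key]
  set d := SL / NL - SR / NR with hd
  have hd0 : d ≤ 0 := by rw [hd]; linarith
  have hδ : 0 < (Yj - Yi) * (1/NL + 1/NR) := by
    apply mul_pos (by linarith)
    positivity
  nlinarith [hδ, hd0]
end

section
/- Continuity lemma for the unidimensional CART functional (Technical Lemma 2, 1-D case): let m̃: [0,1] → ℝ be continuous and define L(A, z) = (1/((z−a)(b−z)))·(C_a^z − ((z−a)/(b−a))·C_a^b)² for A = [a,b] and a < z < b, where C_x^y = ∫_x^y m̃(t) dt. Then for every ε > 0 and every 0 < a < 1 there exists δ > 0 such that: if sup_{0<z<1} L([0,1], z) ≤ δ, then sup_{0<z<a} L([0,a], z) ≤ ε. -/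
open Set intervalIntegral

set_option maxHeartbeats 1600000 in
/-- Continuity lemma for the 1-D theoretical CART functional: if the CART
functional of the cell `[0,1]` is uniformly small, then so is the CART
functional of any sub-cell `[0,a]`. -/
theorem cart_functional_continuity
    (m : ℝ → ℝ) (hm : ContinuousOn m (Icc (0:ℝ) 1))
    (ε : ℝ) (hε : 0 < ε) (a : ℝ) (ha : a ∈ Ioo (0:ℝ) 1) :
    ∃ δ > 0,
      (∀ z ∈ Ioo (0:ℝ) 1,
          (1 / (z * (1 - z))) *
            ((∫ t in (0:ℝ)..z, m t) - z * ∫ t in (0:ℝ)..1, m t) ^ 2 ≤ δ) →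
      ∀ z ∈ Ioo (0:ℝ) a,
          (1 / (z * (a - z))) *
            ((∫ t in (0:ℝ)..z, m t) - (z / a) * ∫ t in (0:ℝ)..a, m t) ^ 2 ≤ ε := by
  obtain ⟨ha0, ha1⟩ := ha
  obtain ⟨M, hM⟩ := isCompact_Icc.exists_bound_of_continuousOn hm
  have hM0 : 0 ≤ M := le_trans (norm_nonneg (m 0)) (hM 0 ⟨le_refl 0, zero_le_one⟩)
  set η : ℝ := min (a/2) (ε*a/(32*M^2+1)) with hηdef
  clear_value η
  have hη0 : 0 < η := hηdef ▸ lt_min (by positivity) (by positivity)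
  have hηa : η ≤ a/2 := hηdef ▸ min_le_left _ _
  have hηε : η ≤ ε*a/(32*M^2+1) := hηdef ▸ min_le_right _ _
  refine ⟨ε*η/4, by positivity, ?_⟩
  intro hδ z hz
  obtain ⟨hz0, hza⟩ := hz
  have hz1 : z < 1 := hza.trans ha1
  have hbound : ∀ x y : ℝ, x ∈ Icc (0:ℝ) 1 → y ∈ Icc (0:ℝ) 1 →
      |∫ t in x..y, m t| ≤ M * |y - x| := by
    intro x y hx hy
    have h := intervalIntegral.norm_integral_le_of_norm_le_const
      (a := x) (b := y) (C := M) (f := m) (fun t ht => hM t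
        (uIcc_subset_Icc hx hy (Ioc_subset_Icc_self ht)))
    simpa [Real.norm_eq_abs] using h
  have hzmem : z ∈ Icc (0:ℝ) 1 := ⟨hz0.le, hz1.le⟩
  have hamem : a ∈ Icc (0:ℝ) 1 := ⟨ha0.le, ha1.le⟩
  have h0mem : (0:ℝ) ∈ Icc (0:ℝ) 1 := ⟨le_refl 0, zero_le_one⟩
  have hsq : ∀ w : ℝ, w ∈ Ioo (0:ℝ) 1 →
      ((∫ t in (0:ℝ)..w, m t) - w * ∫ t in (0:ℝ)..1, m t)^2
        ≤ (ε*η/4) * (w * (1-w)) := by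
    intro w hw
    have hp : 0 < w * (1 - w) := mul_pos hw.1 (by linarith [hw.2])
    have := hδ w hw
    rw [one_div, inv_mul_le_iff₀ hp] at this
    linarith [this]
  -- introduce opaque names
  obtain ⟨Iz, hIzdef⟩ : ∃ x, (∫ t in (0:ℝ)..z, m t) = x := ⟨_, rfl⟩
  obtain ⟨Ia, hIadef⟩ : ∃ x, (∫ t in (0:ℝ)..a, m t) = x := ⟨_, rfl⟩
  obtain ⟨I1, hI1def⟩ : ∃ x, (∫ t in (0:ℝ)..1, m t) = x := ⟨_, rfl⟩
  obtain ⟨J, hJdef⟩ : ∃ x, (∫ t in z..a, m t) = x := ⟨_, rfl⟩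
  have hIa' : |Ia| ≤ M * a := by
    have := hbound 0 a h0mem hamem
    rwa [sub_zero, abs_of_pos ha0, hIadef] at this
  have hq : 0 < z * (a - z) := mul_pos hz0 (by linarith)
  rw [hIzdef, hIadef, one_div, inv_mul_le_iff₀ hq]
  have heq : Iz - (z/a) * Ia = (a * Iz - z * Ia) / a := by
    field_simp
  rw [heq, div_pow, div_le_iff₀ (by positivity : (0:ℝ) < a^2)]
  by_cases hcase : z ≤ a - η
  · -- z away from a : use the δ-smallness at z and at a
    have hFz := hsq z ⟨hz0, hz1⟩
    have hFa := hsq a ⟨ha0, ha1⟩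
    rw [hIzdef, hI1def] at hFz
    rw [hIadef, hI1def] at hFa
    set Fz := Iz - z * I1 with hFzdef
    set Fa := Ia - a * I1 with hFadef
    clear_value Fz Fa
    have hid : a * Iz - z * Ia = a * Fz - z * Fa := by
      rw [hFzdef, hFadef]; ring
    rw [hid]
    have e1 : (a*Fz - z*Fa)^2 ≤ 2*a^2*Fz^2 + 2*z^2*Fa^2 := by
      nlinarith [sq_nonneg (a*Fz + z*Fa)]
    have e2 : 2*a^2*Fz^2 ≤ 2*a^2*((ε*η/4) * (z*(1-z))) := by
      have := mul_le_mul_of_nonneg_left hFz (by positivity : (0:ℝ) ≤ 2*a^2)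
      linarith
    have e3 : 2*z^2*Fa^2 ≤ 2*z^2*((ε*η/4) * (a*(1-a))) := by
      have := mul_le_mul_of_nonneg_left hFa (by positivity : (0:ℝ) ≤ 2*z^2)
      linarith
    have hp : 2*a^2*(z*(1-z)) + 2*z^2*(a*(1-a)) ≤ 4*(a^2*z) := by
      nlinarith [mul_nonneg (mul_nonneg hz0.le ha0.le)
        (by linarith : (0:ℝ) ≤ a - z), sq_nonneg (a*z)]
    have e4 : 2*a^2*((ε*η/4) * (z*(1-z))) + 2*z^2*((ε*η/4) * (a*(1-a)))
        ≤ ε*η*(a^2*z) := by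
      have := mul_le_mul_of_nonneg_left hp
        (by positivity : (0:ℝ) ≤ ε*η/4)
      linarith
    have e5 : ε*η*(a^2*z) ≤ z*(a-z)*ε*a^2 := by
      have h7 : η ≤ a - z := by linarith
      have := mul_le_mul_of_nonneg_left h7
        (by positivity : (0:ℝ) ≤ ε*(a^2*z))
      linarith
    linarith
  · -- z close to a : use continuity of the integral
    push_neg at hcase
    have hz2 : a/2 < z := by linarith
    have hint1 : IntervalIntegrable m MeasureTheory.volume 0 z :=
      (hm.mono (uIcc_subset_Icc h0mem hzmem)).intervalIntegrable
    have hint2 : IntervalIntegrable m MeasureTheory.volume z a :=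
      (hm.mono (uIcc_subset_Icc hzmem hamem)).intervalIntegrable
    have hsplit : Iz + J = Ia := by
      rw [← hIzdef, ← hIadef, ← hJdef]
      exact integral_add_adjacent_intervals hint1 hint2
    have haz : (0:ℝ) < a - z := by linarith
    have hJ' : |J| ≤ M * (a - z) := by
      have := hbound z a hzmem hamem
      rwa [abs_of_pos haz, hJdef] at this
    have hIzval : Iz = Ia - J := by linarith
    have habs : |a * Iz - z * Ia| ≤ 2*a*M*(a-z) := by
      rw [hIzval]
      have h1 : a * (Ia - J) - z * Ia = (a - z) * Ia - a * J := by ring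
      rw [h1]
      calc |(a - z) * Ia - a * J| ≤ |(a-z) * Ia| + |a * J| := abs_sub _ _
        _ = (a-z) * |Ia| + a * |J| := by
            rw [abs_mul, abs_mul, abs_of_pos haz, abs_of_pos ha0]
        _ ≤ (a-z) * (M*a) + a * (M*(a-z)) := by
            have h2 : (0:ℝ) ≤ a - z := haz.le
            gcongr
        _ = 2*a*M*(a-z) := by ring
    have hkey : (a * Iz - z * Ia)^2 ≤ (2*a*M*(a-z))^2 :=
      sq_le_sq' (by linarith [abs_le.mp habs]) (abs_le.mp habs).2
    have h4 : 4*M^2*(a-z) ≤ z*ε := by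
      have hlt : a - z < η := by linarith
      have h5 : 4*M^2*(a-z) ≤ 4*M^2*(ε*a/(32*M^2+1)) := by
        have h5' : a - z ≤ ε*a/(32*M^2+1) := hlt.le.trans hηε
        have := mul_le_mul_of_nonneg_left h5' (by positivity : (0:ℝ) ≤ 4*M^2)
        linarith
      have h6 : 4*M^2*(ε*a/(32*M^2+1)) ≤ ε*a/8 := by
        rw [show 4*M^2*(ε*a/(32*M^2+1)) = (4*M^2*(ε*a))/(32*M^2+1) by ring,
          div_le_div_iff₀ (by positivity) (by norm_num : (0:ℝ) < 8)]
        nlinarith [mul_nonneg hε.le ha0.le, sq_nonneg M]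
      have h7 : ε*a/8 ≤ z*ε := by nlinarith
      linarith
    have h8 : (2*a*M*(a-z))^2 = (a^2*(a-z))*(4*M^2*(a-z)) := by ring
    have h9 : (a^2*(a-z))*(4*M^2*(a-z)) ≤ (a^2*(a-z))*(z*ε) :=
      mul_le_mul_of_nonneg_left h4 (by positivity)
    have h10 : (a^2*(a-z))*(z*ε) = z*(a-z)*ε*a^2 := by ring
    linarith
end
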